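/- Let Σ be a diagonal positive definite d×d matrix, μ ∈ ℝ^d with all μ_i ≠ 0, m := √⟨μ, Σ^{-1}μ⟩, and C := ⟨sign(μ), Σ^{-1}sign(μ)⟩ - ‖Σ^{-1}μ‖_1²/m². Suppose 0 < ε ≤ min_i |μ_i| and Cε²/m² ≤ 1/4. Then the gap G := Φ((-m² + ε‖Σ^{-1}μ‖_1)/‖μ - ε·sign(μ)‖_{Σ^{-1}}) - Φ(-m) satisfies G ≥ (e^{-m²/2}·C·ε²)/(3√(2π)·m). -/

import Mathlib

/-
Write `a = ‖Σ⁻¹μ‖₁` and `b = ⟨sign μ, Σ⁻¹ sign μ⟩`, so that `C = b - a²/m²` and the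
squared perturbed norm is `D = m² - 2εa + ε²b`. The identity `m² D = (m² - εa)² + C ε² m²` shows
that the argument `x` of `Φ` satisfies `x² = m² (1 - u)` with `u = C ε² / D ∈ [0, 1]`, hence
`-m ≤ x ≤ 0` and `x + m ≥ m u / 2` because `√(1 - u) ≤ 1 - u / 2`. On `[-m, x]` the Gaussian
density is at least `φ(m)`, so the gap is at least `m C ε² φ(m) / (2D)`; finally `C ε² ≤ m²/4`
and `0 ≤ εa ≤ m²` give `D ≤ 5m²/4 ≤ 3m²/2`.
-/

noncomputable def Phi (x : ℝ) : ℝ :=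
  ∫ t in Set.Iic x, (Real.sqrt (2 * Real.pi))⁻¹ * Real.exp (-t ^ 2 / 2)

open MeasureTheory Set Real

theorem Real.sign_mul_eq_abs (x : ℝ) : Real.sign x * x = |x| := by
  rcases lt_trichotomy x 0 with h | rfl | h
  · rw [Real.sign_of_neg h, abs_of_neg h]; ring
  · simp
  · rw [Real.sign_of_pos h, abs_of_pos h]; ring

theorem Matrix.inv_diagonal_of_ne_zero {n K : Type*} [Fintype n] [DecidableEq n] [Field K]
    {v : n → K} (hv : ∀ i, v i ≠ 0) : (Matrix.diagonal v)⁻¹ = Matrix.diagonal v⁻¹ := by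
  refine Matrix.inv_eq_right_inv ?_
  rw [Matrix.diagonal_mul_diagonal, ← Matrix.diagonal_one]
  exact congrArg _ (funext fun i => mul_inv_cancel₀ (hv i))

section WeightedSums

variable {ι : Type*} [Fintype ι] {w : ι → ℝ} (μ : ι → ℝ)

lemma sum_sub_mul_sign_mul_weight (hw : ∀ i, 0 ≤ w i) (ε : ℝ) :
    ∑ i, (μ i - ε * Real.sign (μ i)) * (w i * (μ i - ε * Real.sign (μ i))) =
      ∑ i, μ i * (w i * μ i) - 2 * ε * ∑ i, |w i * μ i|
        + ε ^ 2 * ∑ i, Real.sign (μ i) * (w i * Real.sign (μ i)) := by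
  simp only [Finset.mul_sum, ← Finset.sum_sub_distrib, ← Finset.sum_add_distrib]
  refine Finset.sum_congr rfl fun i _ => ?_
  rw [abs_mul, abs_of_nonneg (hw i), ← Real.sign_mul_eq_abs]
  ring

lemma sq_sum_abs_mul_le (hw : ∀ i, 0 ≤ w i) :
    (∑ i, |w i * μ i|) ^ 2 ≤
      (∑ i, μ i * (w i * μ i)) * ∑ i, Real.sign (μ i) * (w i * Real.sign (μ i)) := by
  refine Finset.sum_sq_le_sum_mul_sum_of_sq_le_mul _ (fun i _ => ?_) (fun i _ => ?_)
    (fun i _ => le_of_eq ?_)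
  · nlinarith [hw i, mul_self_nonneg (μ i)]
  · nlinarith [hw i, mul_self_nonneg (Real.sign (μ i))]
  · rw [abs_mul, abs_of_nonneg (hw i), ← Real.sign_mul_eq_abs]
    ring

lemma mul_sum_abs_mul_le {ε : ℝ} (hw : ∀ i, 0 ≤ w i) (hε : ∀ i, ε ≤ |μ i|) :
    ε * ∑ i, |w i * μ i| ≤ ∑ i, μ i * (w i * μ i) := by
  rw [Finset.mul_sum]
  refine Finset.sum_le_sum fun i _ => ?_
  have hμ : μ i * (w i * μ i) = w i * |μ i| * |μ i| := by
    rw [mul_assoc, abs_mul_abs_self]; ring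
  rw [abs_mul, abs_of_nonneg (hw i), hμ, mul_comm ε]
  exact mul_le_mul_of_nonneg_left (hε i) (mul_nonneg (hw i) (abs_nonneg _))

end WeightedSums

noncomputable def phi (t : ℝ) : ℝ := (√(2 * π))⁻¹ * exp (-t ^ 2 / 2)

lemma integrable_phi : Integrable phi := by
  have h := (integrable_exp_neg_mul_sq (b := 1 / 2) (by norm_num)).const_mul (√(2 * π))⁻¹
  convert h using 2 with t
  rw [phi]; ring_nf

lemma phi_pos (t : ℝ) : 0 < phi t := by
  unfold phi; positivity

lemma phi_monotoneOn : MonotoneOn phi (Iic 0) := by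
  intro s hs t ht hst
  have hsq : t ^ 2 ≤ s ^ 2 := by nlinarith [mem_Iic.1 ht]
  unfold phi
  gcongr

lemma Phi_sub_Phi_eq_intervalIntegral (x y : ℝ) : Phi x - Phi y = ∫ t in y..x, phi t :=
  intervalIntegral.integral_Iic_sub_Iic integrable_phi.integrableOn integrable_phi.integrableOn

lemma sub_mul_phi_le_Phi_sub_Phi {x y : ℝ} (hyx : y ≤ x) (hx : x ≤ 0) :
    (x - y) * phi y ≤ Phi x - Phi y := by
  rw [Phi_sub_Phi_eq_intervalIntegral, ← smul_eq_mul, ← intervalIntegral.integral_const]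
  refine intervalIntegral.integral_mono_on hyx intervalIntegrable_const
    integrable_phi.intervalIntegrable fun t ht => ?_
  exact phi_monotoneOn (mem_Iic.2 (hyx.trans hx)) (mem_Iic.2 (ht.2.trans hx)) ht.1

lemma le_add_of_sq_eq_mul_one_sub {m u x : ℝ} (hm : 0 ≤ m) (hu : 0 ≤ u)
    (hx : x ^ 2 = m ^ 2 * (1 - u)) : m * u / 2 ≤ x + m := by
  have hsq : x ^ 2 ≤ (m - m * u / 2) ^ 2 := by nlinarith [sq_nonneg (m * u)]
  have hnn : 0 ≤ m - m * u / 2 := by nlinarith [sq_nonneg x, mul_nonneg hm hu]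
  linarith [(abs_le_of_sq_le_sq' hsq hnn).1]

lemma gap_lower_bound_of_moments {m a b C ε : ℝ} (hm : 0 < m) (hε : 0 < ε) (ha : 0 ≤ a)
    (hεa : ε * a ≤ m ^ 2) (hab : a ^ 2 ≤ m ^ 2 * b) (hC : C = b - a ^ 2 / m ^ 2)
    (hCε : C * ε ^ 2 / m ^ 2 ≤ 1 / 4) :
    exp (-m ^ 2 / 2) * C * ε ^ 2 / (3 * √(2 * π) * m) ≤
      Phi ((-m ^ 2 + ε * a) / √(m ^ 2 - 2 * ε * a + ε ^ 2 * b)) - Phi (-m) := by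
  have hC0 : 0 ≤ C := by
    rw [hC, sub_nonneg, div_le_iff₀ (by positivity)]; linarith
  generalize hD : m ^ 2 - 2 * ε * a + ε ^ 2 * b = D
  have hmD : m ^ 2 * D = (m ^ 2 - ε * a) ^ 2 + C * ε ^ 2 * m ^ 2 := by
    rw [← hD, hC]; field_simp; ring
  have hgap : ∀ x, -m ≤ x → x ≤ 0 → (x + m) * phi m ≤ Phi x - Phi (-m) := fun x hmx hx => by
    simpa [phi] using sub_mul_phi_le_Phi_sub_Phi hmx hx
  have hphi : phi m = exp (-m ^ 2 / 2) / √(2 * π) := by rw [phi]; ring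
  have hD0 : 0 ≤ D := by
    refine nonneg_of_mul_nonneg_right ?_ (by positivity : 0 < m ^ 2)
    rw [hmD]; positivity
  rcases hD0.eq_or_lt with hD0 | hDpos
  · have hCεm : C * ε ^ 2 * m ^ 2 = 0 := by
      nlinarith [sq_nonneg (m ^ 2 - ε * a), mul_nonneg hC0 (sq_nonneg (ε * m))]
    have hCzero : C = 0 := by simpa [hε.ne', hm.ne'] using hCεm
    -- the argument of `Φ` is then the junk value `_ / √0 = 0`
    rw [← hD0, hCzero, sqrt_zero, div_zero]
    simp only [mul_zero, zero_mul, zero_div]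
    linarith [hgap 0 (by linarith) le_rfl, mul_pos hm (phi_pos m)]
  · set x := (-m ^ 2 + ε * a) / √D
    set u := C * ε ^ 2 / D
    have hx : x ^ 2 = m ^ 2 * (1 - u) := by
      rw [div_pow, sq_sqrt hDpos.le]
      have := hDpos.ne'
      simp only [u]
      field_simp
      linear_combination -hmD
    have hxm := le_add_of_sq_eq_mul_one_sub hm.le (by positivity) hx
    have hx0 : x ≤ 0 := div_nonpos_of_nonpos_of_nonneg (by linarith) (sqrt_nonneg _)
    have hD3 : 2 * D ≤ 3 * m ^ 2 := by
      have hCε' : C * ε ^ 2 ≤ m ^ 2 / 4 := by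
        rw [div_le_iff₀ (by positivity)] at hCε; linarith
      have hεa' : (ε * a) * (ε * a) ≤ m ^ 2 * (ε * a) :=
        mul_le_mul_of_nonneg_right hεa (by positivity)
      refine le_of_mul_le_mul_left ?_ (by positivity : 0 < m ^ 2)
      nlinarith
    calc exp (-m ^ 2 / 2) * C * ε ^ 2 / (3 * √(2 * π) * m)
        = C * ε ^ 2 * phi m * (1 / (3 * m)) := by rw [hphi]; field_simp
      _ ≤ C * ε ^ 2 * phi m * (m / (2 * D)) := by
          refine mul_le_mul_of_nonneg_left ?_ (by have := phi_pos m; positivity)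
          rw [div_le_div_iff₀ (by positivity) (by positivity)]
          nlinarith
      _ = m * u / 2 * phi m := by simp only [u]; field_simp
      _ ≤ (x + m) * phi m := by gcongr; exact (phi_pos m).le
      _ ≤ Phi x - Phi (-m) := hgap x (by linarith [mul_nonneg hm.le (by positivity : 0 ≤ u)]) hx0

theorem gap_lower_bound_diagonal_general (d : ℕ) (σ : Fin d → ℝ) (hσ : ∀ i, 0 < σ i)
    (μ : Fin d → ℝ)
    (S : Matrix (Fin d) (Fin d) ℝ) (hSdef : S = Matrix.diagonal σ)
    (m C ε : ℝ)
    (hm : m = Real.sqrt (∑ i, μ i * S⁻¹.mulVec μ i))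
    (hC : C = (∑ i, Real.sign (μ i) * S⁻¹.mulVec (fun j => Real.sign (μ j)) i)
        - (∑ i, |S⁻¹.mulVec μ i|) ^ 2 / m ^ 2)
    (hε0 : 0 < ε) (hε1 : ∀ i, ε ≤ |μ i|)
    (hε2 : C * ε ^ 2 / m ^ 2 ≤ 1 / 4)
    (G : ℝ)
    (hG : G = Phi ((-m ^ 2 + ε * ∑ i, |S⁻¹.mulVec μ i|)
          / Real.sqrt (∑ i, (μ i - ε * Real.sign (μ i))
              * S⁻¹.mulVec (fun j => μ j - ε * Real.sign (μ j)) i))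
        - Phi (-m)) :
    G ≥ Real.exp (-m ^ 2 / 2) * C * ε ^ 2 / (3 * Real.sqrt (2 * Real.pi) * m) := by
  have hw : ∀ i, 0 ≤ (σ i)⁻¹ := fun i => (inv_pos.2 (hσ i)).le
  simp only [hSdef, Matrix.inv_diagonal_of_ne_zero fun i => (hσ i).ne', Matrix.mulVec_diagonal,
    Pi.inv_apply] at hm hC hG
  rcases isEmpty_or_nonempty (Fin d) with hd | hd
  · simp [hm, hG]
  have hT : 0 < ∑ i, μ i * ((σ i)⁻¹ * μ i) := by
    refine Finset.sum_pos (fun i _ => ?_) Finset.univ_nonempty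
    have hμ : μ i ≠ 0 := abs_pos.1 (hε0.trans_le (hε1 i))
    nlinarith [mul_pos (mul_self_pos.2 hμ) (inv_pos.2 (hσ i))]
  have hm0 : 0 < m := hm ▸ sqrt_pos.2 hT
  have hm2 : m ^ 2 = ∑ i, μ i * ((σ i)⁻¹ * μ i) := hm ▸ sq_sqrt hT.le
  rw [sum_sub_mul_sign_mul_weight μ hw, ← hm2] at hG
  rw [ge_iff_le, hG]
  refine gap_lower_bound_of_moments hm0 hε0 (by positivity) ?_ ?_ hC hε2
  · exact hm2 ▸ mul_sum_abs_mul_le μ hw hε1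
  · exact hm2 ▸ sq_sum_abs_mul_le μ hw

theorem gap_lower_bound_diagonal (d : ℕ) (σ : Fin d → ℝ) (hσ : ∀ i, 0 < σ i)
    (μ : Fin d → ℝ) (hμ : ∀ i, μ i ≠ 0)
    (S : Matrix (Fin d) (Fin d) ℝ) (hSdef : S = Matrix.diagonal σ)
    (m C ε : ℝ)
    (hm : m = Real.sqrt (∑ i, μ i * S⁻¹.mulVec μ i))
    (hC : C = (∑ i, Real.sign (μ i) * S⁻¹.mulVec (fun j => Real.sign (μ j)) i)
        - (∑ i, |S⁻¹.mulVec μ i|) ^ 2 / m ^ 2)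
    (hε0 : 0 < ε) (hε1 : ∀ i, ε ≤ |μ i|)
    (hε2 : C * ε ^ 2 / m ^ 2 ≤ 1 / 4)
    (G : ℝ)
    (hG : G = Phi ((-m ^ 2 + ε * ∑ i, |S⁻¹.mulVec μ i|)
          / Real.sqrt (∑ i, (μ i - ε * Real.sign (μ i))
              * S⁻¹.mulVec (fun j => μ j - ε * Real.sign (μ j)) i))
        - Phi (-m)) :
    G ≥ Real.exp (-m ^ 2 / 2) * C * ε ^ 2 / (3 * Real.sqrt (2 * Real.pi) * m) :=
  gap_lower_bound_diagonal_general d σ hσ μ S hSdef m C ε hm hC hε0 hε1 hε2 G hG
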